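/- arXiv:2205.10928 — 3 statements merged into one kernel-verified Lean document; each statement's English description precedes it below -/
import Mathlib

section
/- Let f : ℍ → ℍ be an ℝ-linear isometric bijection of the quaternions (viewed as the 4-dimensional real inner product space ℝ⁴) whose determinant as an ℝ-linear endomorphism equals 1. Then there exist unit quaternions p and q such that f(w) = p * w * q⁻¹ for all w ∈ ℍ. (That is, the map Π from pairs of unit quaternions to SO₄ given by Π(p,q)(w) = p w q⁻¹ is surjective.) -/
/-!
By the Cartan–Dieudonné theorem every isometry of `ℍ ≅ ℝ⁴` is a product of hyperplane
reflections, and the reflection in the hyperplane orthogonal to a unit quaternion `u` is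
`w ↦ -u w̄ u`. Composing such maps, a product of reflections is `w ↦ p w q` or `w ↦ p w̄ q`
with `p`, `q` unit quaternions, according to the parity of the number of (nontrivial)
reflections; that parity is read off from the determinant, so determinant `1` forces the first
form.
-/

open Quaternion
open scoped RealInnerProductSpace

namespace Quaternion

theorem mul_star_mul_self (u w : ℍ) :
    u * star w * u = (2 * ⟪u, w⟫) • u - ‖u‖ ^ 2 • w := by
  have hre : u * star w + w * star u = ((2 * ⟪u, w⟫ : ℝ) : ℍ) := by
    rw [inner_def, ← self_add_star', star_mul, star_star]
  calc u * star w * u = (u * star w + w * star u) * u - w * (star u * u) := by noncomm_ring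
    _ = (2 * ⟪u, w⟫) • u - ‖u‖ ^ 2 • w := by
      rw [hre, star_mul_self, ← coe_commutes, coe_mul_eq_smul, coe_mul_eq_smul,
        normSq_eq_norm_mul_self, sq]

theorem reflection_orthogonal_singleton_apply {v : ℍ} (hv : v ≠ 0) (w : ℍ) :
    (ℝ ∙ v)ᗮ.reflection w = -((‖v‖⁻¹ • v) * star w * (‖v‖⁻¹ • v)) := by
  have hv' : ‖v‖ ≠ 0 := norm_ne_zero_iff.mpr hv
  rw [Submodule.reflection_orthogonal_apply, Submodule.reflection_singleton_apply,
    smul_mul_assoc, mul_smul_comm, smul_mul_assoc, smul_smul, mul_star_mul_self]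
  simp only [RCLike.ofReal_real_eq_id, id, smul_sub, smul_smul]
  field_simp
  module

theorem det_reflection_orthogonal_singleton {v : ℍ} (hv : v ≠ 0) :
    LinearMap.det ((ℝ ∙ v)ᗮ.reflection.toLinearEquiv : ℍ →ₗ[ℝ] ℍ) = -1 := by
  rw [Submodule.det_reflection, Submodule.orthogonal_orthogonal, finrank_span_singleton hv,
    pow_one]

theorem reflection_orthogonal_singleton_zero : (ℝ ∙ (0 : ℍ))ᗮ.reflection = 1 := by
  ext w : 1
  exact Submodule.reflection_mem_subspace_eq_self
    (Submodule.mem_orthogonal_singleton_iff_inner_right.mpr (inner_zero_left w))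

def IsUnitSandwich (g : ℍ → ℍ) : Prop :=
  ∃ p q : ℍ, ‖p‖ = 1 ∧ ‖q‖ = 1 ∧ ∀ w, g w = p * w * q

def IsStarUnitSandwich (g : ℍ → ℍ) : Prop :=
  ∃ p q : ℍ, ‖p‖ = 1 ∧ ‖q‖ = 1 ∧ ∀ w, g w = p * star w * q

theorem IsUnitSandwich.neg_mul_star_mul {g : ℍ → ℍ} (hg : IsUnitSandwich g) {u : ℍ}
    (hu : ‖u‖ = 1) : IsStarUnitSandwich fun w => -(u * star (g w) * u) := by
  obtain ⟨p, q, hp, hq, hpq⟩ := hg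
  refine ⟨-(u * star q), star p * u, by simp [hu, hq], by simp [hu, hp], fun w => ?_⟩
  simp only [hpq, star_mul, neg_mul, mul_assoc]

theorem IsStarUnitSandwich.neg_mul_star_mul {g : ℍ → ℍ} (hg : IsStarUnitSandwich g) {u : ℍ}
    (hu : ‖u‖ = 1) : IsUnitSandwich fun w => -(u * star (g w) * u) := by
  obtain ⟨p, q, hp, hq, hpq⟩ := hg
  refine ⟨-(u * star q), star p * u, by simp [hu, hq], by simp [hu, hp], fun w => ?_⟩
  simp only [hpq, star_mul, star_star, neg_mul, mul_assoc]

end Quaternion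

theorem LinearIsometryEquiv.isUnitSandwich_or_isStarUnitSandwich (φ : ℍ ≃ₗᵢ[ℝ] ℍ) :
    (IsUnitSandwich φ ∧ LinearMap.det (φ.toLinearEquiv : ℍ →ₗ[ℝ] ℍ) = 1) ∨
      (IsStarUnitSandwich φ ∧ LinearMap.det (φ.toLinearEquiv : ℍ →ₗ[ℝ] ℍ) = -1) := by
  obtain ⟨l, -, rfl⟩ := φ.reflections_generate_dim
  induction l with
  | nil => exact Or.inl ⟨⟨1, 1, norm_one, norm_one, fun w => by simp⟩, LinearMap.det_id⟩
  | cons v l ih =>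
    rw [List.map_cons, List.prod_cons]
    by_cases hv : v = 0
    · rwa [hv, reflection_orthogonal_singleton_zero, one_mul]
    have hu : ‖‖v‖⁻¹ • v‖ = 1 := norm_smul_inv_norm hv
    have hdet (ψ : ℍ ≃ₗᵢ[ℝ] ℍ) :
        LinearMap.det (((ℝ ∙ v)ᗮ.reflection * ψ).toLinearEquiv : ℍ →ₗ[ℝ] ℍ) =
          -LinearMap.det (ψ.toLinearEquiv : ℍ →ₗ[ℝ] ℍ) := by
      rw [← neg_one_mul, ← det_reflection_orthogonal_singleton hv]
      exact LinearMap.det_comp _ _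
    have happly (ψ : ℍ ≃ₗᵢ[ℝ] ℍ) : ⇑((ℝ ∙ v)ᗮ.reflection * ψ) =
        fun w => -((‖v‖⁻¹ • v) * star (ψ w) * (‖v‖⁻¹ • v)) :=
      funext fun w => reflection_orthogonal_singleton_apply hv (ψ w)
    rw [hdet, happly]
    rcases ih with ⟨hs, hd⟩ | ⟨hs, hd⟩
    · exact Or.inr ⟨hs.neg_mul_star_mul hu, by rw [hd]⟩
    · exact Or.inl ⟨hs.neg_mul_star_mul hu, by rw [hd, neg_neg]⟩

theorem quaternion_rotation_surjective_general
    (f : Quaternion ℝ →ₗ[ℝ] Quaternion ℝ)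
    (hisom : ∀ w : Quaternion ℝ, ‖f w‖ = ‖w‖)
    (hdet : LinearMap.det f = 1) :
    ∃ p q : Quaternion ℝ, ‖p‖ = 1 ∧ ‖q‖ = 1 ∧
      ∀ w : Quaternion ℝ, f w = p * w * q⁻¹ := by
  let φ : ℍ ≃ₗᵢ[ℝ] ℍ := LinearIsometry.toLinearIsometryEquiv ⟨f, hisom⟩ rfl
  rcases φ.isUnitSandwich_or_isStarUnitSandwich with ⟨⟨p, q, hp, hq, hpq⟩, -⟩ | ⟨-, hφ⟩
  · exact ⟨p, q⁻¹, hp, by rw [norm_inv, hq, inv_one], fun w => by rw [inv_inv]; exact hpq w⟩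
  · exact absurd (hdet.symm.trans hφ) (by norm_num)

/-- Every `ℝ`-linear isometric bijection of the quaternions with determinant `1`
is of the form `w ↦ p * w * q⁻¹` for some unit quaternions `p` and `q`:
the map `Π` from pairs of unit quaternions to `SO₄` is surjective. -/
theorem quaternion_rotation_surjective
    (f : Quaternion ℝ →ₗ[ℝ] Quaternion ℝ)
    (hbij : Function.Bijective f)
    (hisom : ∀ w : Quaternion ℝ, ‖f w‖ = ‖w‖)
    (hdet : LinearMap.det f = 1) :
    ∃ p q : Quaternion ℝ, ‖p‖ = 1 ∧ ‖q‖ = 1 ∧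
      ∀ w : Quaternion ℝ, f w = p * w * q⁻¹ :=
  quaternion_rotation_surjective_general f hisom hdet
end

section
/- In the group of pairs of unit quaternions (with componentwise multiplication), define á₁ = ((1+i)/√2, (1-i)/√2), á₂ = ((1+k)/√2, (1-k)/√2), á₃ = ((1+i)/√2, (1+i)/√2). Then these elements satisfy the braid relations á₁ á₂ á₁ = á₂ á₁ á₂, á₂ á₃ á₂ = á₃ á₂ á₃, and á₁ á₃ = á₃ á₁; moreover á₁² = (i, -i), á₂² = (k, -k), and á₃² = (i, i). -/
/-- The imaginary unit `i` of the quaternions. -/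
noncomputable def qi : Quaternion ℝ := ⟨0, 1, 0, 0⟩

/-- The imaginary unit `k` of the quaternions. -/
noncomputable def qk : Quaternion ℝ := ⟨0, 0, 0, 1⟩

/-- `á₁ = ((1+i)/√2, (1-i)/√2)`. -/
noncomputable def aacute₁ : Quaternion ℝ × Quaternion ℝ :=
  ((1 + qi) / ((Real.sqrt 2 : ℝ) : Quaternion ℝ),
   (1 - qi) / ((Real.sqrt 2 : ℝ) : Quaternion ℝ))

/-- `á₂ = ((1+k)/√2, (1-k)/√2)`. -/
noncomputable def aacute₂ : Quaternion ℝ × Quaternion ℝ :=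
  ((1 + qk) / ((Real.sqrt 2 : ℝ) : Quaternion ℝ),
   (1 - qk) / ((Real.sqrt 2 : ℝ) : Quaternion ℝ))

/-- `á₃ = ((1+i)/√2, (1+i)/√2)`. -/
noncomputable def aacute₃ : Quaternion ℝ × Quaternion ℝ :=
  ((1 + qi) / ((Real.sqrt 2 : ℝ) : Quaternion ℝ),
   (1 + qi) / ((Real.sqrt 2 : ℝ) : Quaternion ℝ))

/-
Every component of `á₁, á₂, á₃` is a rotor `(1 + u) / √2 = exp ((π / 4) u)` with `u ∈ {±i, ±k}`,
so `u * u = -1`. For anticommuting `u, v` with `u * u = v * v = -1` one has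
`(1 + u)(1 + v)(1 + u) = 2 (u + v)`, which is symmetric in `u` and `v`: this is the braid relation.
Likewise `(1 + u)² = 2 u` gives the squares, and the rotors of `u` and `-u` commute.
-/

section Rotor

variable {A : Type*} [Ring A] {u v : A}

theorem one_add_mul_one_add_mul_one_add_of_anticomm (hu : u * u = -1) (huv : u * v = -(v * u)) :
    (1 + u) * (1 + v) * (1 + u) = 2 • (u + v) := by
  have huvu : u * v * u = v := by
    rw [huv, neg_mul, mul_assoc, hu, mul_neg_one, neg_neg]
  calc (1 + u) * (1 + v) * (1 + u) = 1 + u * u + 2 • u + v + (u * v + v * u) + u * v * u := by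
        noncomm_ring
    _ = 2 • (u + v) := by
        rw [hu, huvu, huv, neg_add_cancel]
        abel

theorem one_add_braid_of_anticomm (hu : u * u = -1) (hv : v * v = -1) (huv : u * v = -(v * u)) :
    (1 + u) * (1 + v) * (1 + u) = (1 + v) * (1 + u) * (1 + v) := by
  have hvu : v * u = -(u * v) := by rw [huv, neg_neg]
  rw [one_add_mul_one_add_mul_one_add_of_anticomm hu huv,
    one_add_mul_one_add_mul_one_add_of_anticomm hv hvu, add_comm]

theorem one_add_mul_self (hu : u * u = -1) : (1 + u) * (1 + u) = 2 • u := by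
  rw [mul_add, add_mul, add_mul, one_mul, mul_one, one_mul, hu, two_smul]
  abel

variable [Algebra ℝ A]

noncomputable def rotor (u : A) : A := (√2)⁻¹ • (1 + u)

theorem rotor_braid (hu : u * u = -1) (hv : v * v = -1) (huv : u * v = -(v * u)) :
    rotor u * rotor v * rotor u = rotor v * rotor u * rotor v := by
  simp only [rotor, smul_mul_smul, one_add_braid_of_anticomm hu hv huv]

theorem rotor_sq (hu : u * u = -1) : rotor u ^ 2 = u := by
  have hs : (√2)⁻¹ * (√2)⁻¹ = (2⁻¹ : ℝ) := by
    rw [← mul_inv, Real.mul_self_sqrt zero_le_two]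
  rw [rotor, sq, smul_mul_smul, one_add_mul_self hu, hs, ← Nat.cast_smul_eq_nsmul ℝ, smul_smul,
    Nat.cast_ofNat, inv_mul_cancel₀ two_ne_zero, one_smul]

theorem commute_rotor_neg (u : A) : Commute (rotor u) (rotor (-u)) := by
  refine (Commute.add_right (.one_right _) ?_).smul_left _ |>.smul_right _
  exact ((Commute.one_left u).add_left (.refl u)).neg_right

end Rotor

section Quaternion

open Quaternion

theorem Quaternion.div_coe (a : ℍ[ℝ]) (r : ℝ) : a / (r : ℍ[ℝ]) = r⁻¹ • a := by
  rw [div_eq_mul_inv, ← coe_inv, mul_coe_eq_smul]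

theorem qi_mul_qi : qi * qi = -1 := by
  ext <;> simp [re_mul, imI_mul, imJ_mul, imK_mul] <;> simp [qi]

theorem qk_mul_qk : qk * qk = -1 := by
  ext <;> simp [re_mul, imI_mul, imJ_mul, imK_mul] <;> simp [qk]

theorem qi_mul_qk : qi * qk = -(qk * qi) := by
  ext <;> simp [re_mul, imI_mul, imJ_mul, imK_mul] <;> simp [qi, qk]

end Quaternion

theorem aacute₁_eq : aacute₁ = (rotor qi, rotor (-qi)) := by
  simp only [aacute₁, Quaternion.div_coe, sub_eq_add_neg, rotor]

theorem aacute₂_eq : aacute₂ = (rotor qk, rotor (-qk)) := by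
  simp only [aacute₂, Quaternion.div_coe, sub_eq_add_neg, rotor]

theorem aacute₃_eq : aacute₃ = (rotor qi, rotor qi) := by
  simp only [aacute₃, Quaternion.div_coe, rotor]

/-- The elements `á₁, á₂, á₃` of `S³ × S³` satisfy the braid relations, and their
squares are `â = (i,-i)`, `b̂ = (k,-k)`, `ĉ = (i,i)` respectively. -/
theorem aacute_braid_relations :
    aacute₁ * aacute₂ * aacute₁ = aacute₂ * aacute₁ * aacute₂ ∧
    aacute₂ * aacute₃ * aacute₂ = aacute₃ * aacute₂ * aacute₃ ∧
    aacute₁ * aacute₃ = aacute₃ * aacute₁ ∧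
    aacute₁ ^ 2 = (qi, -qi) ∧
    aacute₂ ^ 2 = (qk, -qk) ∧
    aacute₃ ^ 2 = (qi, qi) := by
  have hi : -qi * -qi = -1 := by rw [neg_mul_neg, qi_mul_qi]
  have hk : -qk * -qk = -1 := by rw [neg_mul_neg, qk_mul_qk]
  have hik : -qi * -qk = -(-qk * -qi) := by simp only [neg_mul_neg, qi_mul_qk]
  have hik' : qi * -qk = -(-qk * qi) := by simp only [neg_mul, mul_neg, qi_mul_qk]
  simp only [aacute₁_eq, aacute₂_eq, aacute₃_eq, Prod.mk_mul_mk, Prod.pow_mk, Prod.mk.injEq]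
  refine ⟨⟨rotor_braid qi_mul_qi qk_mul_qk qi_mul_qk, rotor_braid hi hk hik⟩,
    ⟨(rotor_braid qi_mul_qi qk_mul_qk qi_mul_qk).symm, (rotor_braid qi_mul_qi hk hik').symm⟩,
    ⟨trivial, (commute_rotor_neg qi).symm.eq⟩, ⟨rotor_sq qi_mul_qi, rotor_sq hi⟩,
    ⟨rotor_sq qk_mul_qk, rotor_sq hk⟩, ⟨rotor_sq qi_mul_qi, rotor_sq qi_mul_qi⟩⟩
end

section
/- Let x₁, x₂, x₃, x₄ ∈ ℝ and let M be the 4×4 real matrix with rows (0,1,0,0), (1,0,0,0), (x₁,x₂,0,1), (x₃,x₄,1,0). Say that M lies in the Bruhat cell of a permutation ρ of {1,2,3,4} if there exist invertible upper triangular real matrices U₀, U₁ with M = U₀ P_ρ U₁, where P_ρ is the matrix whose (j, ρ(j)) entries are 1 and all other entries 0. Then: (a) M lies in the Bruhat cell of the permutation ρ₀ = (1 2)(3 4) if and only if x₁ = x₂ = x₃ = x₄ = 0; (b) M lies in the Bruhat cell of the 4-cycle ρ₁ defined by 1↦4, 2↦1, 3↦2, 4↦3 if and only if x₁ = x₃ =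 x₄ = 0 and x₂ ≠ 0; (c) M lies in the Bruhat cell of the 4-cycle ρ₂ defined by 1↦2, 2↦3, 3↦4, 4↦1 if and only if x₁ = x₂ = x₄ = 0 and x₃ ≠ 0. -/
/-!
Because `U₀` and `U₁` are upper triangular, in `(U₀ * P_ρ * U₁) i j = ∑ k, U₀ i k * U₁ (ρ k) j`
only the indices `k` with `i ≤ k` and `ρ k ≤ j` contribute. So an entry of a matrix in the cell
of `ρ` vanishes if there is no such `k`, and is a unit (a product of diagonal entries) if `k = i`
is the only one; this gives the forward directions of (a) and (b). For (c), every entry involved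
is a single term `U₀ i 3 * U₁ 0 j` (indices in `Fin 4`), and the entries `0` and `1` of `M` at
`(2, 2)`, `(3, 2)` and at `(1, 1)`, `(1, 0)` force `U₀ 2 3 = 0` and `U₁ 0 1 = 0`. The converses
are explicit factorizations.
-/

/-- A square matrix is upper triangular if all entries below the diagonal vanish. -/
def IsUpperTriangular (U : Matrix (Fin 4) (Fin 4) ℝ) : Prop :=
  ∀ i j : Fin 4, j < i → U i j = 0

/-- The permutation matrix of `ρ`: its `(j, ρ j)` entries are `1` and all other
entries are `0`. -/
def permMatrix (ρ : Equiv.Perm (Fin 4)) : Matrix (Fin 4) (Fin 4) ℝ :=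
  Matrix.of fun i j => if j = ρ i then 1 else 0

/-- `M` lies in the Bruhat cell of `ρ` if `M = U₀ P_ρ U₁` for some invertible
upper triangular `U₀`, `U₁`. -/
def InBruhatCell (M : Matrix (Fin 4) (Fin 4) ℝ) (ρ : Equiv.Perm (Fin 4)) : Prop :=
  ∃ U₀ U₁ : Matrix (Fin 4) (Fin 4) ℝ,
    IsUnit U₀ ∧ IsUnit U₁ ∧ IsUpperTriangular U₀ ∧ IsUpperTriangular U₁ ∧
    M = U₀ * permMatrix ρ * U₁

namespace Matrix

variable {n R : Type*}

theorem mul_permMatrix_mul_apply [Fintype n] [DecidableEq n] [Semiring R]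
    (U₀ U₁ : Matrix n n R) (σ : Equiv.Perm n) (i j : n) :
    (U₀ * σ.permMatrix R * U₁) i j = ∑ k, U₀ i k * U₁ (σ k) j := by
  rw [Matrix.mul_assoc, PEquiv.toMatrix_toPEquiv_mul, mul_apply]
  rfl

theorem isUpperTriangular_fin_four [Zero R] (a₀₀ a₀₁ a₀₂ a₀₃ a₁₁ a₁₂ a₁₃ a₂₂ a₂₃ a₃₃ : R) :
    (!![a₀₀, a₀₁, a₀₂, a₀₃; 0, a₁₁, a₁₂, a₁₃; 0, 0, a₂₂, a₂₃; 0, 0, 0, a₃₃]).IsUpperTriangular := by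
  intro i j hji
  fin_cases i <;> fin_cases j <;> first | rfl | exact absurd hji (by decide)

namespace IsUpperTriangular

variable [LinearOrder n] {U₀ U₁ : Matrix n n R} {σ : Equiv.Perm n} {i j : n}

theorem isUnit_iff [Fintype n] [DecidableEq n] [CommRing R] (h : U₀.IsUpperTriangular) :
    IsUnit U₀ ↔ ∀ i, IsUnit (U₀ i i) := by
  rw [isUnit_iff_isUnit_det, det_of_isUpperTriangular h, IsUnit.prod_univ_iff]

theorem apply_mul_apply_eq_zero [MulZeroClass R] (h₀ : U₀.IsUpperTriangular)
    (h₁ : U₁.IsUpperTriangular) {k : n} (hk : i ≤ k → j < σ k) : U₀ i k * U₁ (σ k) j = 0 := by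
  rcases lt_or_ge k i with hki | hik
  · rw [h₀ hki, zero_mul]
  · rw [h₁ (hk hik), mul_zero]

variable [Fintype n] [DecidableEq n]

theorem mul_permMatrix_mul_apply_eq_zero [Semiring R] (h₀ : U₀.IsUpperTriangular)
    (h₁ : U₁.IsUpperTriangular) (h : ∀ k, i ≤ k → j < σ k) :
    (U₀ * σ.permMatrix R * U₁) i j = 0 := by
  rw [mul_permMatrix_mul_apply]
  exact Finset.sum_eq_zero fun k _ => apply_mul_apply_eq_zero h₀ h₁ (h k)

theorem mul_permMatrix_mul_apply_eq_single [Semiring R] (h₀ : U₀.IsUpperTriangular)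
    (h₁ : U₁.IsUpperTriangular) (l : n) (h : ∀ k ≠ l, i ≤ k → j < σ k) :
    (U₀ * σ.permMatrix R * U₁) i j = U₀ i l * U₁ (σ l) j := by
  rw [mul_permMatrix_mul_apply]
  exact Finset.sum_eq_single l (fun k _ hk => apply_mul_apply_eq_zero h₀ h₁ (h k hk)) (by simp)

theorem isUnit_mul_permMatrix_mul_apply [CommRing R] (h₀ : U₀.IsUpperTriangular)
    (h₁ : U₁.IsUpperTriangular) (hu₀ : IsUnit U₀) (hu₁ : IsUnit U₁) (hσ : σ i = j)
    (h : ∀ k, i < k → j < σ k) : IsUnit ((U₀ * σ.permMatrix R * U₁) i j) := by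
  rw [mul_permMatrix_mul_apply_eq_single h₀ h₁ i fun k hk hik => h k (hik.lt_of_ne' hk), hσ]
  exact (h₀.isUnit_iff.1 hu₀ i).mul (h₁.isUnit_iff.1 hu₁ j)

end IsUpperTriangular

end Matrix

theorem permMatrix_eq_permMatrix (ρ : Equiv.Perm (Fin 4)) : permMatrix ρ = ρ.permMatrix ℝ := by
  ext i j
  simp [permMatrix, eq_comm]

theorem inBruhatCell_iff {M : Matrix (Fin 4) (Fin 4) ℝ} {ρ : Equiv.Perm (Fin 4)} :
    InBruhatCell M ρ ↔ ∃ U₀ U₁ : Matrix (Fin 4) (Fin 4) ℝ, IsUnit U₀ ∧ IsUnit U₁ ∧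
      U₀.IsUpperTriangular ∧ U₁.IsUpperTriangular ∧ M = U₀ * ρ.permMatrix ℝ * U₁ := by
  simp only [InBruhatCell, permMatrix_eq_permMatrix]
  rfl

namespace InBruhatCell

variable {M : Matrix (Fin 4) (Fin 4) ℝ} {ρ : Equiv.Perm (Fin 4)}

theorem apply_eq_zero (h : InBruhatCell M ρ) (i j : Fin 4) (hij : ∀ k, i ≤ k → j < ρ k) :
    M i j = 0 := by
  obtain ⟨U₀, U₁, -, -, h₀, h₁, rfl⟩ := inBruhatCell_iff.1 h
  exact h₀.mul_permMatrix_mul_apply_eq_zero h₁ hij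

theorem isUnit_apply (h : InBruhatCell M ρ) (i j : Fin 4) (hρ : ρ i = j)
    (hij : ∀ k, i < k → j < ρ k) : IsUnit (M i j) := by
  obtain ⟨U₀, U₁, hu₀, hu₁, h₀, h₁, rfl⟩ := inBruhatCell_iff.1 h
  exact h₀.isUnit_mul_permMatrix_mul_apply h₁ hu₀ hu₁ hρ hij

end InBruhatCell

section Slice

def slice (x₁ x₂ x₃ x₄ : ℝ) : Matrix (Fin 4) (Fin 4) ℝ :=
  !![0, 1, 0, 0; 1, 0, 0, 0; x₁, x₂, 0, 1; x₃, x₄, 1, 0]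

variable {x₁ x₂ x₃ x₄ : ℝ}

theorem slice_entries_of_inBruhatCell_swap_mul_swap
    (h : InBruhatCell (slice x₁ x₂ x₃ x₄) (Equiv.swap 0 1 * Equiv.swap 2 3)) :
    x₁ = 0 ∧ x₂ = 0 ∧ x₃ = 0 ∧ x₄ = 0 :=
  ⟨h.apply_eq_zero 2 0 (by decide), h.apply_eq_zero 2 1 (by decide),
    h.apply_eq_zero 3 0 (by decide), h.apply_eq_zero 3 1 (by decide)⟩

theorem slice_inBruhatCell_swap_mul_swap :
    InBruhatCell (slice 0 0 0 0) (Equiv.swap 0 1 * Equiv.swap 2 3) := by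
  refine ⟨1, 1, isUnit_one, isUnit_one, fun _ _ h => Matrix.one_apply_ne h.ne',
    fun _ _ h => Matrix.one_apply_ne h.ne', ?_⟩
  rw [Matrix.one_mul, Matrix.mul_one]
  ext i j
  fin_cases i <;> fin_cases j <;> rfl

theorem slice_entries_of_inBruhatCell_finRotate_inv
    (h : InBruhatCell (slice x₁ x₂ x₃ x₄) (finRotate 4)⁻¹) :
    x₁ = 0 ∧ x₃ = 0 ∧ x₄ = 0 ∧ x₂ ≠ 0 :=
  ⟨h.apply_eq_zero 2 0 (by decide), h.apply_eq_zero 3 0 (by decide),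
    h.apply_eq_zero 3 1 (by decide), (h.isUnit_apply 2 1 (by decide) (by decide)).ne_zero⟩

theorem slice_inBruhatCell_finRotate_inv (hx₂ : x₂ ≠ 0) :
    InBruhatCell (slice 0 x₂ 0 0) (finRotate 4)⁻¹ := by
  have h₀ := Matrix.isUpperTriangular_fin_four (1 : ℝ) 0 x₂⁻¹ 0 1 0 0 1 0 1
  have h₁ := Matrix.isUpperTriangular_fin_four (1 : ℝ) 0 0 0 x₂ 0 1 1 0 (-x₂⁻¹)
  refine inBruhatCell_iff.2 ⟨_, _, h₀.isUnit_iff.2 fun i => ?_, h₁.isUnit_iff.2 fun i => ?_,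
    h₀, h₁, ?_⟩
  · fin_cases i <;> simp
  · fin_cases i <;> simp [hx₂]
  · ext i j
    rw [Matrix.mul_permMatrix_mul_apply]
    fin_cases i <;> fin_cases j <;> simp [Fin.sum_univ_four, slice, hx₂]

theorem slice_entries_of_inBruhatCell_finRotate
    (h : InBruhatCell (slice x₁ x₂ x₃ x₄) (finRotate 4)) :
    x₁ = 0 ∧ x₂ = 0 ∧ x₄ = 0 ∧ x₃ ≠ 0 := by
  obtain ⟨U₀, U₁, -, -, h₀, h₁, hM⟩ := inBruhatCell_iff.1 h
  have hsingle (i j : Fin 4) (hij : ∀ k ≠ 3, i ≤ k → j < finRotate 4 k) :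
      slice x₁ x₂ x₃ x₄ i j = U₀ i 3 * U₁ 0 j :=
    hM ▸ h₀.mul_permMatrix_mul_apply_eq_single h₁ 3 hij
  have e20 : x₁ = U₀ 2 3 * U₁ 0 0 := hsingle 2 0 (by decide)
  have e21 : x₂ = U₀ 2 3 * U₁ 0 1 := hsingle 2 1 (by decide)
  have e30 : x₃ = U₀ 3 3 * U₁ 0 0 := hsingle 3 0 (by decide)
  have e31 : x₄ = U₀ 3 3 * U₁ 0 1 := hsingle 3 1 (by decide)
  have e22 : 0 = U₀ 2 3 * U₁ 0 2 := hsingle 2 2 (by decide)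
  have e32 : 1 = U₀ 3 3 * U₁ 0 2 := hsingle 3 2 (by decide)
  have e10 : 1 = U₀ 1 3 * U₁ 0 0 := hsingle 1 0 (by decide)
  have e11 : 0 = U₀ 1 3 * U₁ 0 1 := hsingle 1 1 (by decide)
  have hU₀ : U₀ 2 3 = 0 :=
    (mul_eq_zero.1 e22.symm).resolve_right (right_ne_zero_of_mul_eq_one e32.symm)
  have hU₁ : U₁ 0 1 = 0 :=
    (mul_eq_zero.1 e11.symm).resolve_left (left_ne_zero_of_mul_eq_one e10.symm)
  refine ⟨by simp [e20, hU₀], by simp [e21, hU₀], by simp [e31, hU₁], ?_⟩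
  rw [e30]
  exact mul_ne_zero (left_ne_zero_of_mul_eq_one e32.symm) (right_ne_zero_of_mul_eq_one e10.symm)

theorem slice_inBruhatCell_finRotate (hx₃ : x₃ ≠ 0) :
    InBruhatCell (slice 0 0 x₃ 0) (finRotate 4) := by
  have h₀ := Matrix.isUpperTriangular_fin_four (1 : ℝ) 0 0 0 1 0 x₃⁻¹ 1 0 1
  have h₁ := Matrix.isUpperTriangular_fin_four x₃ 0 1 0 1 0 0 (-x₃⁻¹) 0 1
  refine inBruhatCell_iff.2 ⟨_, _, h₀.isUnit_iff.2 fun i => ?_, h₁.isUnit_iff.2 fun i => ?_,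
    h₀, h₁, ?_⟩
  · fin_cases i <;> simp
  · fin_cases i <;> simp [hx₃]
  · ext i j
    rw [Matrix.mul_permMatrix_mul_apply]
    fin_cases i <;> fin_cases j <;> simp [Fin.sum_univ_four, slice, hx₃]

end Slice

/-- Characterization of the Bruhat cells of the slice of matrices
`M = !![0,1,0,0; 1,0,0,0; x₁,x₂,0,1; x₃,x₄,1,0]`:
(a) `M ∈ Bru_{(12)(34)}` iff `x₁ = x₂ = x₃ = x₄ = 0`;
(b) `M ∈ Bru_{ρ₁}` (with `ρ₁ : 1↦4, 2↦1, 3↦2, 4↦3`) iff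
    `x₁ = x₃ = x₄ = 0` and `x₂ ≠ 0`;
(c) `M ∈ Bru_{ρ₂}` (with `ρ₂ : 1↦2, 2↦3, 3↦4, 4↦1`) iff
    `x₁ = x₂ = x₄ = 0` and `x₃ ≠ 0`. -/
theorem bruhat_cells_of_slice (x₁ x₂ x₃ x₄ : ℝ) :
    (InBruhatCell !![0, 1, 0, 0; 1, 0, 0, 0; x₁, x₂, 0, 1; x₃, x₄, 1, 0]
        (Equiv.swap (0 : Fin 4) 1 * Equiv.swap (2 : Fin 4) 3) ↔
      x₁ = 0 ∧ x₂ = 0 ∧ x₃ = 0 ∧ x₄ = 0) ∧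
    (InBruhatCell !![0, 1, 0, 0; 1, 0, 0, 0; x₁, x₂, 0, 1; x₃, x₄, 1, 0]
        (finRotate 4)⁻¹ ↔
      x₁ = 0 ∧ x₃ = 0 ∧ x₄ = 0 ∧ x₂ ≠ 0) ∧
    (InBruhatCell !![0, 1, 0, 0; 1, 0, 0, 0; x₁, x₂, 0, 1; x₃, x₄, 1, 0]
        (finRotate 4) ↔
      x₁ = 0 ∧ x₂ = 0 ∧ x₄ = 0 ∧ x₃ ≠ 0) := by
  refine ⟨⟨slice_entries_of_inBruhatCell_swap_mul_swap, ?_⟩,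
    ⟨slice_entries_of_inBruhatCell_finRotate_inv, ?_⟩,
    ⟨slice_entries_of_inBruhatCell_finRotate, ?_⟩⟩
  · rintro ⟨rfl, rfl, rfl, rfl⟩
    exact slice_inBruhatCell_swap_mul_swap
  · rintro ⟨rfl, rfl, rfl, hx₂⟩
    exact slice_inBruhatCell_finRotate_inv hx₂
  · rintro ⟨rfl, rfl, rfl, hx₃⟩
    exact slice_inBruhatCell_finRotate hx₃
end
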